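/- arXiv:1910.06986 — 10 statements merged into one kernel-verified Lean document; each statement's English description precedes it below -/
import Mathlib

section
/- Let A be an n×n real SPD matrix, 𝓑 an m×m real SPD matrix, Π an n×m real matrix and ℐ an m×n real matrix with Π ℐ = Iₙ (the n×n identity). Assume there is a constant β > 0 with (ℐv)ᵀ 𝓑 (ℐv) ≤ β · vᵀ A v for all v ∈ ℝⁿ. Then vᵀ A⁻¹ v ≤ β · vᵀ (Π 𝓑⁻¹ Πᵀ) v for all v ∈ ℝⁿ. -/
/-!
Put `w = A⁻¹ v` and `a = 𝓑⁻¹ Πᵀ v`. Since `Π ℐ = 1`, `vᵀ A⁻¹ v = vᵀ Π ℐ w = aᵀ 𝓑 (ℐ w)`, so the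
Cauchy–Schwarz inequality for the form of `𝓑` and the stability hypothesis at `w` give
`(vᵀ A⁻¹ v)² ≤ (aᵀ 𝓑 a) · β (vᵀ A⁻¹ v)`, where `aᵀ 𝓑 a = vᵀ Π 𝓑⁻¹ Πᵀ v ≥ 0`. Cancelling one factor
`vᵀ A⁻¹ v` when it is positive finishes the proof.
-/

open Matrix

theorem Matrix.PosSemidef.dotProduct_mulVec_sq_le {ι R : Type*} [Fintype ι] [DecidableEq ι]
    [CommRing R] [LinearOrder R] [IsStrictOrderedRing R] [StarRing R] [TrivialStar R]
    {M : Matrix ι ι R} (hM : M.PosSemidef) (x y : ι → R) :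
    (x ⬝ᵥ M *ᵥ y) ^ 2 ≤ (x ⬝ᵥ M *ᵥ x) * (y ⬝ᵥ M *ᵥ y) := by
  have hsymm : M.toBilin'.IsSymm :=
    isSymm_toBilin'_iff_isSymm.mpr (isHermitian_iff_isSymm.mp hM.isHermitian)
  have hnonneg (z : ι → R) : 0 ≤ M.toBilin' z z := by
    simpa [toBilin'_apply'] using hM.dotProduct_mulVec_nonneg z
  simpa only [toBilin'_apply'] using
    M.toBilin'.apply_sq_le_of_symm hnonneg (LinearMap.BilinForm.isSymm_iff.mp hsymm) x y

theorem Matrix.dotProduct_mul_mul_transpose_mulVec {ι κ R : Type*} [Fintype ι] [Fintype κ]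
    [CommSemiring R] (P : Matrix ι κ R) (M : Matrix κ κ R) (v : ι → R) :
    v ⬝ᵥ (P * M * Pᵀ) *ᵥ v = (Pᵀ *ᵥ v) ⬝ᵥ M *ᵥ (Pᵀ *ᵥ v) := by
  rw [← mulVec_mulVec, ← mulVec_mulVec, dotProduct_mulVec, mulVec_transpose]

theorem Matrix.mulVec_nonsing_inv_mulVec {ι R : Type*} [Fintype ι] [DecidableEq ι] [CommRing R]
    {M : Matrix ι ι R} (hM : IsUnit M.det) (v : ι → R) : M *ᵥ M⁻¹ *ᵥ v = v := by
  rw [mulVec_mulVec, mul_nonsing_inv M hM, one_mulVec]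

/-- Stability half of the fictitious space lemma. -/
theorem stmt_0 {n m : ℕ}
    (A : Matrix (Fin n) (Fin n) ℝ) (hA : A.PosDef)
    (B : Matrix (Fin m) (Fin m) ℝ) (hB : B.PosDef)
    (P : Matrix (Fin n) (Fin m) ℝ) (J : Matrix (Fin m) (Fin n) ℝ)
    (hPJ : P * J = 1)
    (β : ℝ) (hβ : 0 < β)
    (hstab : ∀ v : Fin n → ℝ,
      (J.mulVec v) ⬝ᵥ B.mulVec (J.mulVec v) ≤ β * (v ⬝ᵥ A.mulVec v)) :
    ∀ v : Fin n → ℝ,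
      v ⬝ᵥ A⁻¹.mulVec v ≤ β * (v ⬝ᵥ (P * B⁻¹ * Pᵀ).mulVec v) := by
  intro v
  set w := A⁻¹ *ᵥ v
  set a := B⁻¹ *ᵥ Pᵀ *ᵥ v
  have hAw : A *ᵥ w = v := mulVec_nonsing_inv_mulVec hA.det_pos.ne'.isUnit v
  have hBa : B *ᵥ a = Pᵀ *ᵥ v := mulVec_nonsing_inv_mulVec hB.det_pos.ne'.isUnit _
  have hpair : v ⬝ᵥ w = a ⬝ᵥ B *ᵥ J *ᵥ w := calc
    v ⬝ᵥ w = v ⬝ᵥ P *ᵥ J *ᵥ w := by rw [mulVec_mulVec, hPJ, one_mulVec]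
    _ = B *ᵥ a ⬝ᵥ J *ᵥ w := by rw [hBa, mulVec_transpose]; exact dotProduct_mulVec v P _
    _ = a ⬝ᵥ B *ᵥ J *ᵥ w := by
      rw [dotProduct_mulVec a B, ← mulVec_transpose, (isHermitian_iff_isSymm.mp hB.isHermitian).eq]
  have hq : v ⬝ᵥ (P * B⁻¹ * Pᵀ) *ᵥ v = a ⬝ᵥ B *ᵥ a := by
    rw [dotProduct_mul_mul_transpose_mulVec, hBa, dotProduct_comm]
  have hstab_w : J *ᵥ w ⬝ᵥ B *ᵥ J *ᵥ w ≤ β * (v ⬝ᵥ w) := by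
    simpa only [hAw, dotProduct_comm w v] using hstab w
  have hcs := hB.posSemidef.dotProduct_mulVec_sq_le a (J *ᵥ w)
  have ha_nonneg : 0 ≤ a ⬝ᵥ B *ᵥ a := by
    simpa using hB.posSemidef.dotProduct_mulVec_nonneg a
  rw [← hpair] at hcs
  rw [hq]
  nlinarith [mul_le_mul_of_nonneg_left hstab_w ha_nonneg, mul_nonneg hβ.le ha_nonneg]
end

section
/- Let A be an n×n real SPD matrix, 𝓑 an m×m real SPD matrix, and Π an n×m real matrix such that (Πw)ᵀ A (Πw) ≤ γ · wᵀ 𝓑 w for all w ∈ ℝᵐ, for some constant γ > 0. Then vᵀ (Π 𝓑⁻¹ Πᵀ) v ≤ γ · vᵀ A⁻¹ v for all v ∈ ℝⁿ. -/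
/-!
Write `w = 𝓑⁻¹ Πᵀ v`, so that `vᵀ Π 𝓑⁻¹ Πᵀ v = wᵀ 𝓑 w = vᵀ Π w`. Expanding
`0 ≤ (A⁻¹ u - y)ᵀ A (A⁻¹ u - y)` gives the Young-type inequality
`2 uᵀ y ≤ uᵀ A⁻¹ u + yᵀ A y`; with `u = γ v` and `y = Π w` the continuity bound turns it into
`2 γ s ≤ γ² vᵀ A⁻¹ v + γ s` for `s = wᵀ 𝓑 w`, and dividing by `γ > 0` gives the claim.
-/

open Matrix

namespace Matrix

variable {ι : Type*} [Fintype ι]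

theorem IsSymm.dotProduct_mulVec_comm {A : Matrix ι ι ℝ} (hA : A.IsSymm) (x y : ι → ℝ) :
    x ⬝ᵥ A *ᵥ y = A *ᵥ x ⬝ᵥ y := by
  rw [dotProduct_mulVec, ← vecMul_transpose, hA.eq]

theorem PosDef.two_mul_dotProduct_le [DecidableEq ι] {A : Matrix ι ι ℝ} (hA : A.PosDef)
    (u y : ι → ℝ) : 2 * (u ⬝ᵥ y) ≤ u ⬝ᵥ A⁻¹ *ᵥ u + y ⬝ᵥ A *ᵥ y := by
  have hsymm : A.IsSymm := isHermitian_iff_isSymm.mp hA.isHermitian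
  set x := A⁻¹ *ᵥ u
  have hAx : A *ᵥ x = u := by
    rw [mulVec_mulVec, mul_nonsing_inv _ ((isUnit_iff_isUnit_det A).mp hA.isUnit), one_mulVec]
  have hsq := hA.posSemidef.dotProduct_mulVec_nonneg (x - y)
  simp only [star_trivial, mulVec_sub, dotProduct_sub, sub_dotProduct] at hsq
  rw [hsymm.dotProduct_mulVec_comm x x, hsymm.dotProduct_mulVec_comm x y, hAx,
    dotProduct_comm y u] at hsq
  linarith

end Matrix

/-- Continuity half of the fictitious space lemma. -/
theorem stmt_1 {n m : ℕ}
    (A : Matrix (Fin n) (Fin n) ℝ) (hA : A.PosDef)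
    (B : Matrix (Fin m) (Fin m) ℝ) (hB : B.PosDef)
    (P : Matrix (Fin n) (Fin m) ℝ)
    (γ : ℝ) (hγ : 0 < γ)
    (hcont : ∀ w : Fin m → ℝ,
      (P.mulVec w) ⬝ᵥ A.mulVec (P.mulVec w) ≤ γ * (w ⬝ᵥ B.mulVec w)) :
    ∀ v : Fin n → ℝ,
      v ⬝ᵥ (P * B⁻¹ * Pᵀ).mulVec v ≤ γ * (v ⬝ᵥ A⁻¹.mulVec v) := by
  intro v
  set w := B⁻¹ *ᵥ Pᵀ *ᵥ v
  have hBw : B *ᵥ w = Pᵀ *ᵥ v := by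
    rw [mulVec_mulVec, mul_nonsing_inv _ ((isUnit_iff_isUnit_det B).mp hB.isUnit), one_mulVec]
  have hPw : (P * B⁻¹ * Pᵀ) *ᵥ v = P *ᵥ w := by simp only [w, mulVec_mulVec, Matrix.mul_assoc]
  have henergy : v ⬝ᵥ P *ᵥ w = w ⬝ᵥ B *ᵥ w := by
    rw [hBw, dotProduct_mulVec, ← mulVec_transpose, dotProduct_comm]
  have hyoung := hA.two_mul_dotProduct_le (γ • v) (P *ᵥ w)
  simp only [smul_dotProduct, mulVec_smul, dotProduct_smul, smul_eq_mul, henergy] at hyoung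
  rw [hPw, henergy]
  refine le_of_mul_le_mul_left ?_ hγ
  linarith [hcont w]
end

section
/- Let A be an n×n real SPD matrix and M an n×n real matrix such that M + Mᵀ − A is SPD. Then M is invertible and the symmetrized smoother M̄ = M (M + Mᵀ − A)⁻¹ Mᵀ is SPD. -/
/-!
If `Mv = 0` then `vᴴ (M + Mᴴ) v = 0`, so positive definiteness of `M + Mᴴ` forces `M` to be
invertible. Over `ℝ`, `M + Mᵀ = (M + Mᵀ - A) + A` is a sum of SPD matrices, and
`M (M + Mᵀ - A)⁻¹ Mᵀ` is a congruence of the SPD matrix `(M + Mᵀ - A)⁻¹` by the invertible `M`.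
-/

open Matrix

theorem Matrix.isUnit_of_posDef_add_conjTranspose {n K : Type*} [Fintype n] [DecidableEq n]
    [Field K] [PartialOrder K] [StarRing K] {M : Matrix n n K} (hM : (M + Mᴴ).PosDef) :
    IsUnit M := by
  by_contra h
  obtain ⟨v, hv, hMv⟩ : ∃ v ≠ 0, M *ᵥ v = 0 := by
    obtain ⟨a, b, hab⟩ := Function.not_injective_iff.mp <| mulVec_injective_iff_isUnit.not.mpr h
    exact ⟨a - b, by simp [sub_eq_zero, hab, mulVec_sub]⟩
  have hform : star v ⬝ᵥ ((M + Mᴴ) *ᵥ v) = 0 := by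
    rw [add_mulVec, dotProduct_add, dotProduct_mulVec (star v) Mᴴ, ← star_mulVec, hMv]
    simp
  exact (hM.dotProduct_mulVec_pos hv).ne' hform

/-- The symmetrized smoother M̄ = M (M + Mᵀ − A)⁻¹ Mᵀ is SPD
whenever A is SPD and M + Mᵀ − A is SPD; in particular M is invertible. -/
theorem stmt_2 {n : ℕ}
    (A M : Matrix (Fin n) (Fin n) ℝ) (hA : A.PosDef)
    (hM : (M + Mᵀ - A).PosDef) :
    IsUnit M ∧ (M * (M + Mᵀ - A)⁻¹ * Mᵀ).PosDef := by
  have hsum : (M + Mᴴ).PosDef := by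
    simpa [conjTranspose_eq_transpose_of_trivial] using hM.add hA
  have hunit : IsUnit M := isUnit_of_posDef_add_conjTranspose hsum
  refine ⟨hunit, ?_⟩
  simpa [conjTranspose_eq_transpose_of_trivial] using
    hM.inv.mul_mul_conjTranspose_same (vecMul_injective_iff_isUnit.mpr hunit)
end

section
/- Let A be an n×n real SPD matrix and M an n×n real matrix such that M + Mᵀ − A is SPD, and let M̄ = M (M + Mᵀ − A)⁻¹ Mᵀ be the symmetrized smoother. Then 2M̄ − A is SPD; in particular vᵀ A v ≤ 2 vᵀ M̄ v for all v ∈ ℝⁿ. -/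
/-! With `N = M + Mᴴ - A`, the symmetrized smoother satisfies the exact identity
`M̄ - A = (A - Mᴴ) N⁻¹ (A - M)`. For Hermitian `A` the right-hand side is `B N⁻¹ Bᴴ` with
`B = A - Mᴴ`, hence positive semidefinite, so `2 M̄ - A = A + 2 (M̄ - A)` is positive definite
as soon as `A` is. -/

open Matrix

namespace Matrix

variable {n : Type*} [Fintype n] [DecidableEq n]

noncomputable def symmetrizedSmoother {R : Type*} [CommRing R] [StarRing R]
    (A M : Matrix n n R) : Matrix n n R :=
  M * (M + Mᴴ - A)⁻¹ * Mᴴ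

lemma symmetrizedSmoother_sub_self {R : Type*} [CommRing R] [StarRing R]
    {A M : Matrix n n R} (h : IsUnit (M + Mᴴ - A).det) :
    symmetrizedSmoother A M - A = (A - Mᴴ) * (M + Mᴴ - A)⁻¹ * (A - M) := by
  set N := M + Mᴴ - A with hN
  have hM : M = N + (A - Mᴴ) := by rw [hN]; abel
  have hMH : Mᴴ = N + (A - M) := by rw [hN]; abel
  have expand : symmetrizedSmoother A M
      = N * N⁻¹ * N + (A - Mᴴ) * (N⁻¹ * N) + (N * N⁻¹) * (A - M)
        + (A - Mᴴ) * N⁻¹ * (A - M) :=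
    calc M * N⁻¹ * Mᴴ = (N + (A - Mᴴ)) * N⁻¹ * (N + (A - M)) := by rw [← hM, ← hMH]
      _ = _ := by noncomm_ring
  rw [expand, mul_nonsing_inv N h, nonsing_inv_mul N h, one_mul, mul_one, one_mul, hN]
  abel

variable {K : Type*} [Field K] [PartialOrder K] [StarRing K] {A M : Matrix n n K}

lemma posSemidef_symmetrizedSmoother_sub_self (hA : A.IsHermitian)
    (hN : (M + Mᴴ - A).PosDef) : (symmetrizedSmoother A M - A).PosSemidef := by
  have hAM : A - M = (A - Mᴴ)ᴴ := by
    rw [conjTranspose_sub, hA.eq, conjTranspose_conjTranspose]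
  rw [symmetrizedSmoother_sub_self ((isUnit_iff_isUnit_det _).mp hN.isUnit), hAM]
  exact hN.posSemidef.inv.mul_mul_conjTranspose_same _

lemma posDef_two_smul_symmetrizedSmoother_sub [AddLeftMono K]
    (hA : A.PosDef) (hN : (M + Mᴴ - A).PosDef) :
    ((2 : K) • symmetrizedSmoother A M - A).PosDef := by
  have hS := posSemidef_symmetrizedSmoother_sub_self hA.isHermitian hN
  rw [show (2 : K) • symmetrizedSmoother A M - A
      = A + ((symmetrizedSmoother A M - A) + (symmetrizedSmoother A M - A)) by module]
  exact hA.add_posSemidef (hS.add hS)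

end Matrix

/-- 2M̄ − A is SPD, where M̄ = M (M + Mᵀ − A)⁻¹ Mᵀ is the symmetrized smoother;
in particular vᵀ A v ≤ 2 vᵀ M̄ v for all v. -/
theorem stmt_3 {n : ℕ}
    (A M : Matrix (Fin n) (Fin n) ℝ) (hA : A.PosDef)
    (hM : (M + Mᵀ - A).PosDef) :
    ((2 : ℝ) • (M * (M + Mᵀ - A)⁻¹ * Mᵀ) - A).PosDef ∧
    ∀ v : Fin n → ℝ,
      v ⬝ᵥ A.mulVec v ≤ 2 * (v ⬝ᵥ (M * (M + Mᵀ - A)⁻¹ * Mᵀ).mulVec v) := by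
  rw [← conjTranspose_eq_transpose_of_trivial] at hM ⊢
  have hPD := posDef_two_smul_symmetrizedSmoother_sub hA hM
  refine ⟨hPD, fun v => ?_⟩
  have hv := hPD.posSemidef.dotProduct_mulVec_nonneg v
  simp only [sub_mulVec, smul_mulVec, dotProduct_sub, dotProduct_smul, smul_eq_mul,
    star_trivial] at hv
  unfold symmetrizedSmoother at hv
  linarith
end

section
/- Let A be an n×n real SPD matrix with (unique) SPD square root A^{1/2}, and let M be an invertible n×n real matrix. Then M + Mᵀ − A is SPD if and only if the spectral (Euclidean operator) norm of I − A^{1/2} M⁻¹ A^{1/2} is strictly less than 1. -/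
/-!
With `B = M⁻¹ A^{1/2}` and `E = I - A^{1/2} M⁻¹ A^{1/2}` one has the congruence
`Bᵀ (M + Mᵀ - A) B = I - Eᵀ E`. Congruence by the invertible `B` preserves positive definiteness,
and `I - Eᵀ E` is positive definite iff `‖E v‖ < ‖v‖` for every `v ≠ 0`, which, since the unit
sphere is compact and the operator norm is attained on it, means `‖E‖ < 1`.
-/

open Matrix

namespace ContinuousLinearMap

variable {E F : Type*} [NormedAddCommGroup E] [NormedSpace ℝ E] [FiniteDimensional ℝ E]
  [NormedAddCommGroup F] [NormedSpace ℝ F]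

theorem exists_norm_eq_one_norm_apply_eq_opNorm [Nontrivial E] (T : E →L[ℝ] F) :
    ∃ x : E, ‖x‖ = 1 ∧ ‖T x‖ = ‖T‖ := by
  obtain ⟨x, hx, hmax⟩ := (isCompact_sphere (0 : E) 1).exists_isMaxOn
    (NormedSpace.sphere_nonempty.2 zero_le_one) T.continuous.norm.continuousOn
  have hx1 : ‖x‖ = 1 := mem_sphere_zero_iff_norm.1 hx
  refine ⟨x, hx1, le_antisymm (T.unit_le_opNorm x hx1.le) ?_⟩
  exact T.opNorm_le_of_unit_norm (norm_nonneg _) fun y hy => hmax (mem_sphere_zero_iff_norm.2 hy)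

theorem opNorm_lt_one_iff (T : E →L[ℝ] F) : ‖T‖ < 1 ↔ ∀ x : E, x ≠ 0 → ‖T x‖ < ‖x‖ := by
  refine ⟨fun hT x hx => (T.le_opNorm x).trans_lt (mul_lt_of_lt_one_left (norm_pos_iff.2 hx) hT),
    fun h => ?_⟩
  rcases subsingleton_or_nontrivial E with hE | hE
  · simp [Subsingleton.elim T 0]
  · obtain ⟨x, hx1, hTx⟩ := T.exists_norm_eq_one_norm_apply_eq_opNorm
    rw [← hTx, ← hx1]
    exact h x (ne_zero_of_norm_ne_zero (hx1 ▸ one_ne_zero))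

end ContinuousLinearMap

namespace Matrix

variable {n : Type*} [Fintype n] [DecidableEq n]

theorem dotProduct_one_sub_transpose_mul_self_mulVec (F : Matrix n n ℝ)
    (x : EuclideanSpace ℝ n) :
    x.ofLp ⬝ᵥ ((1 - Fᵀ * F) *ᵥ x.ofLp) = ‖x‖ ^ 2 - ‖toEuclideanCLM (𝕜 := ℝ) F x‖ ^ 2 := by
  rw [← real_inner_self_eq_norm_sq, ← real_inner_self_eq_norm_sq, real_inner_comm,
    inner_toEuclideanCLM, EuclideanSpace.inner_eq_star_dotProduct, ofLp_toEuclideanCLM]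
  simp only [sub_mulVec, one_mulVec, dotProduct_sub, ← mulVec_mulVec, dotProduct_mulVec,
    vecMul_transpose, star_trivial]

theorem posDef_one_sub_transpose_mul_self_iff (F : Matrix n n ℝ) :
    (1 - Fᵀ * F).PosDef ↔
      ‖(toEuclideanCLM (𝕜 := ℝ) F : EuclideanSpace ℝ n →L[ℝ] EuclideanSpace ℝ n)‖ < 1 := by
  have hF : (1 - Fᵀ * F).IsHermitian := by
    simp [IsHermitian, conjTranspose_eq_transpose_of_trivial, transpose_sub]
  rw [posDef_iff_dotProduct_mulVec, and_iff_right hF, ContinuousLinearMap.opNorm_lt_one_iff,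
    (WithLp.equiv 2 (n → ℝ)).forall_congr_left]
  refine forall_congr' fun x => imp_congr (by simp) ?_
  rw [star_trivial, ← WithLp.ofLp_toLp 2 x, dotProduct_one_sub_transpose_mul_self_mulVec, sub_pos,
    sq_lt_sq₀ (norm_nonneg _) (norm_nonneg _)]
  rfl

variable {R : Type*} [CommRing R]

theorem transpose_mul_mul_eq_one_sub_transpose_mul_self {M N S : Matrix n n R}
    (hMN : M * N = 1) (hS : Sᵀ = S) :
    (N * S)ᵀ * (M + Mᵀ - S * S) * (N * S) = 1 - (1 - S * N * S)ᵀ * (1 - S * N * S) := by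
  have hM : ∀ X : Matrix n n R, M * (N * X) = X := fun X => by
    rw [← Matrix.mul_assoc, hMN, Matrix.one_mul]
  have hMt : ∀ X : Matrix n n R, Nᵀ * (Mᵀ * X) = X := fun X => by
    rw [← Matrix.mul_assoc, ← transpose_mul, hMN, transpose_one, Matrix.one_mul]
  simp only [transpose_mul, transpose_sub, transpose_one, hS, Matrix.mul_add, Matrix.add_mul,
    Matrix.mul_sub, Matrix.sub_mul, Matrix.mul_assoc, hM, hMt, Matrix.one_mul, Matrix.mul_one]
  abel

end Matrix

theorem stmt_5_general {n : ℕ}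
    (A M R : Matrix (Fin n) (Fin n) ℝ)
    (hR : R.PosDef) (hR2 : R * R = A)
    (hM : IsUnit M) :
    (M + Mᵀ - A).PosDef ↔
      ‖(Matrix.toEuclideanCLM (𝕜 := ℝ)
          ((1 : Matrix (Fin n) (Fin n) ℝ) - R * M⁻¹ * R) :
        EuclideanSpace ℝ (Fin n) →L[ℝ] EuclideanSpace ℝ (Fin n))‖ < 1 := by
  subst hR2
  have hRt : Rᵀ = R := by rw [← conjTranspose_eq_transpose_of_trivial]; exact hR.1
  have hMM : M * M⁻¹ = 1 := mul_nonsing_inv M ((isUnit_iff_isUnit_det M).1 hM)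
  have hB : IsUnit (M⁻¹ * R) := (isUnit_nonsing_inv_iff.2 hM).mul hR.isUnit
  rw [← hB.posDef_star_left_conjugate_iff, star_eq_conjTranspose,
    conjTranspose_eq_transpose_of_trivial, transpose_mul_mul_eq_one_sub_transpose_mul_self hMM hRt,
    posDef_one_sub_transpose_mul_self_iff]

/-- M + Mᵀ − A is SPD iff the stationary iteration with M is A-convergent, i.e.
the spectral norm of I − A^{1/2} M⁻¹ A^{1/2} is less than 1. -/
theorem stmt_5 {n : ℕ}
    (A M R : Matrix (Fin n) (Fin n) ℝ) (hA : A.PosDef)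
    (hR : R.PosDef) (hR2 : R * R = A)
    (hM : IsUnit M) :
    (M + Mᵀ - A).PosDef ↔
      ‖(Matrix.toEuclideanCLM (𝕜 := ℝ)
          ((1 : Matrix (Fin n) (Fin n) ℝ) - R * M⁻¹ * R) :
        EuclideanSpace ℝ (Fin n) →L[ℝ] EuclideanSpace ℝ (Fin n))‖ < 1 :=
  stmt_5_general A M R hR hR2 hM
end

section
/- Let A be an n×n real SPD matrix, M an n×n real matrix such that M + Mᵀ − A is SPD (hence M is invertible), and W an n×n real symmetric positive semidefinite matrix satisfying vᵀ W v ≤ γ · vᵀ A⁻¹ v for all v ∈ ℝⁿ, for some γ > 0. Then vᵀ (I − M⁻ᵀ A) W (I − A M⁻¹) v ≤ γ · vᵀ A⁻¹ v for all v ∈ ℝⁿ, where M⁻ᵀ denotes the inverse of the transpose of M. -/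
/-!
Since `(I - A M⁻¹)ᵀ = I - M⁻ᵀ A`, the left side is the `W`-form at `u = (I - A M⁻¹) v`, which is
at most `γ · uᵀ A⁻¹ u`. So it suffices that `I - A M⁻¹` does not increase the `A⁻¹`-energy:
writing `v = M w` gives `u = (M - A) w` and `vᵀ A⁻¹ v - uᵀ A⁻¹ u = wᵀ (M + Mᵀ - A) w ≥ 0`.
-/

open Matrix

namespace Matrix

variable {ι : Type*} [Fintype ι]

theorem mulVec_dotProduct_mulVec_mulVec {R : Type*} [CommSemiring R] (B X : Matrix ι ι R)
    (w : ι → R) : (B *ᵥ w) ⬝ᵥ X *ᵥ (B *ᵥ w) = w ⬝ᵥ (Bᵀ * X * B) *ᵥ w := by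
  rw [← mulVec_mulVec, ← mulVec_mulVec, dotProduct_mulVec w Bᵀ, vecMul_transpose, mulVec_mulVec]

variable [DecidableEq ι]

theorem isUnit_of_posDef_add_transpose {M : Matrix ι ι ℝ} (hM : (M + Mᵀ).PosDef) : IsUnit M := by
  by_contra hM'
  obtain ⟨x, hx, hMx⟩ : ∃ x ≠ 0, M *ᵥ x = 0 := by
    obtain ⟨a, b, hab⟩ :=
      Function.not_injective_iff.mp <| mulVec_injective_iff_isUnit.not.mpr hM'
    exact ⟨a - b, sub_ne_zero.mpr hab.2, by rw [mulVec_sub, hab.1, sub_self]⟩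
  have := hM.dotProduct_mulVec_pos hx
  rw [star_trivial, add_mulVec, dotProduct_add, dotProduct_mulVec x Mᵀ, vecMul_transpose,
    hMx] at this
  simp at this

theorem transpose_mul_inv_mul_sub_eq {R : Type*} [CommRing R] {A : Matrix ι ι R} (hA : A.IsSymm)
    (hAdet : IsUnit A.det) (M : Matrix ι ι R) :
    Mᵀ * A⁻¹ * M - (M - A)ᵀ * A⁻¹ * (M - A) = M + Mᵀ - A := by
  have expand : (Mᵀ - A) * A⁻¹ * (M - A)
      = Mᵀ * A⁻¹ * M - Mᵀ * (A⁻¹ * A) - A * A⁻¹ * M + A * A⁻¹ * A := by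
    noncomm_ring
  rw [transpose_sub, hA.eq, expand, nonsing_inv_mul A hAdet, mul_nonsing_inv A hAdet]
  noncomm_ring

theorem dotProduct_inv_mulVec_one_sub_mul_inv_le {A : Matrix ι ι ℝ} (hA : A.IsSymm)
    (hAdet : IsUnit A.det) {M : Matrix ι ι ℝ} (hMdet : IsUnit M.det)
    (hMA : (M + Mᵀ - A).PosSemidef) (v : ι → ℝ) :
    ((1 - A * M⁻¹) *ᵥ v) ⬝ᵥ A⁻¹ *ᵥ ((1 - A * M⁻¹) *ᵥ v) ≤ v ⬝ᵥ A⁻¹ *ᵥ v := by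
  obtain ⟨w, rfl⟩ : ∃ w, v = M *ᵥ w :=
    ⟨M⁻¹ *ᵥ v, by rw [mulVec_mulVec, mul_nonsing_inv M hMdet, one_mulVec]⟩
  have hresidual : (1 - A * M⁻¹) *ᵥ (M *ᵥ w) = (M - A) *ᵥ w := by
    rw [mulVec_mulVec, sub_mul, one_mul, mul_assoc, nonsing_inv_mul M hMdet, mul_one]
  have hgap : (M *ᵥ w) ⬝ᵥ A⁻¹ *ᵥ (M *ᵥ w) - ((M - A) *ᵥ w) ⬝ᵥ A⁻¹ *ᵥ ((M - A) *ᵥ w)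
      = w ⬝ᵥ (M + Mᵀ - A) *ᵥ w := by
    rw [mulVec_dotProduct_mulVec_mulVec, mulVec_dotProduct_mulVec_mulVec, ← dotProduct_sub,
      ← sub_mulVec, transpose_mul_inv_mul_sub_eq hA hAdet]
  have hnonneg : 0 ≤ w ⬝ᵥ (M + Mᵀ - A) *ᵥ w := by
    simpa using hMA.dotProduct_mulVec_nonneg w
  rw [hresidual]
  linarith

theorem transpose_one_sub_mul_inv {R : Type*} [CommRing R] {A : Matrix ι ι R} (hA : A.IsSymm)
    (M : Matrix ι ι R) : (1 - A * M⁻¹)ᵀ = 1 - (Mᵀ)⁻¹ * A := by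
  rw [transpose_sub, transpose_one, transpose_mul, hA.eq, transpose_nonsing_inv]

end Matrix

theorem stmt_6_general {n : ℕ}
    (A M W : Matrix (Fin n) (Fin n) ℝ) (hA : A.PosDef)
    (hM : (M + Mᵀ - A).PosDef)
    (γ : ℝ) (hγ : 0 < γ)
    (hWbound : ∀ v : Fin n → ℝ, v ⬝ᵥ W.mulVec v ≤ γ * (v ⬝ᵥ A⁻¹.mulVec v)) :
    ∀ v : Fin n → ℝ,
      v ⬝ᵥ ((1 - (Mᵀ)⁻¹ * A) * W * (1 - A * M⁻¹)).mulVec v ≤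
        γ * (v ⬝ᵥ A⁻¹.mulVec v) := by
  intro v
  have hAsymm : A.IsSymm := hA.isHermitian
  have hAdet : IsUnit A.det := (isUnit_iff_isUnit_det A).mp hA.isUnit
  have hMdet : IsUnit M.det := (isUnit_iff_isUnit_det M).mp <|
    isUnit_of_posDef_add_transpose (by simpa using hM.add hA)
  rw [← transpose_one_sub_mul_inv hAsymm, ← mulVec_dotProduct_mulVec_mulVec]
  calc _ ≤ γ * (((1 - A * M⁻¹) *ᵥ v) ⬝ᵥ A⁻¹ *ᵥ ((1 - A * M⁻¹) *ᵥ v)) := hWbound _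
    _ ≤ γ * (v ⬝ᵥ A⁻¹ *ᵥ v) := mul_le_mul_of_nonneg_left
        (dotProduct_inv_mulVec_one_sub_mul_inv_le hAsymm hAdet hMdet hM.posSemidef v) hγ.le

/-- Conjugation by the A-convergent smoothing iteration operators does not
increase the upper spectral bound relative to A⁻¹. -/
theorem stmt_6 {n : ℕ}
    (A M W : Matrix (Fin n) (Fin n) ℝ) (hA : A.PosDef)
    (hM : (M + Mᵀ - A).PosDef) (hW : W.PosSemidef)
    (γ : ℝ) (hγ : 0 < γ)
    (hWbound : ∀ v : Fin n → ℝ, v ⬝ᵥ W.mulVec v ≤ γ * (v ⬝ᵥ A⁻¹.mulVec v)) :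
    ∀ v : Fin n → ℝ,
      v ⬝ᵥ ((1 - (Mᵀ)⁻¹ * A) * W * (1 - A * M⁻¹)).mulVec v ≤
        γ * (v ⬝ᵥ A⁻¹.mulVec v) :=
  stmt_6_general A M W hA hM γ hγ hWbound
end

section
/- Let A be an n×n real SPD matrix, 𝓑 an m×m real SPD matrix, and Π an n×m real matrix such that (Πw)ᵀ A (Πw) ≤ γ · wᵀ 𝓑 w for all w ∈ ℝᵐ, for some γ > 0. Let M be an n×n real matrix with M + Mᵀ − A SPD, let M̄ = M (M + Mᵀ − A)⁻¹ Mᵀ, and define B_add⁻¹ = M̄⁻¹ + Π 𝓑⁻¹ Πᵀ. Then vᵀ B_add⁻¹ v ≤ (γ + 2) · vᵀ A⁻¹ v for all v ∈ ℝⁿ. -/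
/-!
Every bound comes from one completing-the-square inequality: for `X` positive definite,
`2 yᵀv - yᵀXy ≤ vᵀX⁻¹v` for all `y`, since the difference is `(y - X⁻¹v)ᵀX(y - X⁻¹v)`.

With `X = M + Mᵀ - A`, `y = v` and `Mᵀv` in place of `v` it gives `A ≤ M̄` as quadratic forms.
With `y = c⁻¹ Q Y⁻¹ Qᵀ v` it turns a bound `QᵀXQ ≤ c Y` into the dual bound `Q Y⁻¹ Qᵀ ≤ c X⁻¹`;
applied to `(Q, Y, c) = (1, M̄, 1)` and to `(Π, 𝓑, γ)` this bounds the two summands of `B_add⁻¹`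
by `A⁻¹` and `γ A⁻¹`.
-/

open Matrix

namespace Matrix

variable {ι κ : Type*} [Fintype ι] [Fintype κ]

lemma dotProduct_mul_mul_transpose_mulVec_s8 {Z : Matrix κ κ ℝ} (Q : Matrix ι κ ℝ) (v : ι → ℝ) :
    v ⬝ᵥ (Q * Z * Qᵀ) *ᵥ v = (Qᵀ *ᵥ v) ⬝ᵥ Z *ᵥ (Qᵀ *ᵥ v) := by
  rw [← mulVec_mulVec, ← mulVec_mulVec, ← dotProduct_transpose_mulVec Q, dotProduct_comm]

variable [DecidableEq ι] [DecidableEq κ]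

lemma PosDef.two_mul_dotProduct_sub_le_dotProduct_inv_mulVec {X : Matrix ι ι ℝ}
    (hX : X.PosDef) (v y : ι → ℝ) :
    2 * (y ⬝ᵥ v) - y ⬝ᵥ X *ᵥ y ≤ v ⬝ᵥ X⁻¹ *ᵥ v := by
  set x := X⁻¹ *ᵥ v
  have hXx : X *ᵥ x = v := by
    rw [mulVec_mulVec, mul_nonsing_inv _ ((isUnit_iff_isUnit_det X).mp hX.isUnit), one_mulVec]
  have hXt : Xᵀ = X := by simpa using hX.isHermitian.eq
  have hsymm : x ⬝ᵥ X *ᵥ y = y ⬝ᵥ v := by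
    rw [← dotProduct_transpose_mulVec, hXt, hXx]
  have hsq : 0 ≤ (y - x) ⬝ᵥ X *ᵥ (y - x) := by
    simpa using hX.posSemidef.dotProduct_mulVec_nonneg (y - x)
  simp only [mulVec_sub, dotProduct_sub, sub_dotProduct, hXx, hsymm] at hsq
  rw [dotProduct_comm v x]
  linarith

lemma dotProduct_mulVec_le_symmetrizedSmoother {A M : Matrix ι ι ℝ}
    (hN : (M + Mᵀ - A).PosDef) (v : ι → ℝ) :
    v ⬝ᵥ A *ᵥ v ≤ v ⬝ᵥ (M * (M + Mᵀ - A)⁻¹ * Mᵀ) *ᵥ v := by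
  have key := hN.two_mul_dotProduct_sub_le_dotProduct_inv_mulVec (Mᵀ *ᵥ v) v
  simp only [sub_mulVec, add_mulVec, dotProduct_sub, dotProduct_add,
    dotProduct_transpose_mulVec] at key
  rw [dotProduct_mul_mul_transpose_mulVec_s8]
  linarith

lemma posDef_symmetrizedSmoother {A M : Matrix ι ι ℝ} (hA : A.PosDef)
    (hN : (M + Mᵀ - A).PosDef) : (M * (M + Mᵀ - A)⁻¹ * Mᵀ).PosDef := by
  have hherm := (hN.inv.posSemidef.mul_mul_conjTranspose_same M).isHermitian
  rw [conjTranspose_eq_transpose_of_trivial] at hherm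
  refine PosDef.of_dotProduct_mulVec_pos hherm fun v hv => ?_
  simpa using (hA.dotProduct_mulVec_pos hv).trans_le
    (by simpa using dotProduct_mulVec_le_symmetrizedSmoother hN v)

lemma PosDef.dotProduct_mul_inv_mul_transpose_le {X : Matrix ι ι ℝ} {Y : Matrix κ κ ℝ}
    {Q : Matrix ι κ ℝ} {c : ℝ} (hX : X.PosDef) (hY : IsUnit Y) (hc : 0 < c)
    (h : ∀ w, (Q *ᵥ w) ⬝ᵥ X *ᵥ (Q *ᵥ w) ≤ c * (w ⬝ᵥ Y *ᵥ w)) (v : ι → ℝ) :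
    v ⬝ᵥ (Q * Y⁻¹ * Qᵀ) *ᵥ v ≤ c * (v ⬝ᵥ X⁻¹ *ᵥ v) := by
  rw [dotProduct_mul_mul_transpose_mulVec_s8]
  set w := Y⁻¹ *ᵥ (Qᵀ *ᵥ v)
  set s := (Qᵀ *ᵥ v) ⬝ᵥ w
  have hYw : Y *ᵥ w = Qᵀ *ᵥ v := by
    rw [mulVec_mulVec, mul_nonsing_inv _ ((isUnit_iff_isUnit_det Y).mp hY), one_mulVec]
  have hs : (Q *ᵥ w) ⬝ᵥ v = s := by
    rw [dotProduct_comm, ← dotProduct_transpose_mulVec, dotProduct_comm]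
  have hsY : w ⬝ᵥ Y *ᵥ w = s := by rw [hYw, dotProduct_comm]
  have hQw : c⁻¹ * ((Q *ᵥ w) ⬝ᵥ X *ᵥ (Q *ᵥ w)) ≤ s := by
    rw [inv_mul_le_iff₀ hc, ← hsY]
    exact h w
  have key := hX.two_mul_dotProduct_sub_le_dotProduct_inv_mulVec v (c⁻¹ • Q *ᵥ w)
  simp only [mulVec_smul, smul_dotProduct, dotProduct_smul, smul_eq_mul, hs] at key
  have hcs : c⁻¹ * s ≤ v ⬝ᵥ X⁻¹ *ᵥ v := by
    nlinarith [mul_le_mul_of_nonneg_left hQw (inv_nonneg.mpr hc.le)]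
  rwa [inv_mul_le_iff₀ hc] at hcs

end Matrix

/-- Upper spectral bound for the additive auxiliary space preconditioner. -/
theorem stmt_8 {n m : ℕ}
    (A : Matrix (Fin n) (Fin n) ℝ) (hA : A.PosDef)
    (B : Matrix (Fin m) (Fin m) ℝ) (hB : B.PosDef)
    (P : Matrix (Fin n) (Fin m) ℝ)
    (γ : ℝ) (hγ : 0 < γ)
    (hcont : ∀ w : Fin m → ℝ,
      (P.mulVec w) ⬝ᵥ A.mulVec (P.mulVec w) ≤ γ * (w ⬝ᵥ B.mulVec w))
    (M : Matrix (Fin n) (Fin n) ℝ) (hM : (M + Mᵀ - A).PosDef) :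
    ∀ v : Fin n → ℝ,
      v ⬝ᵥ ((M * (M + Mᵀ - A)⁻¹ * Mᵀ)⁻¹ + P * B⁻¹ * Pᵀ).mulVec v ≤
        (γ + 2) * (v ⬝ᵥ A⁻¹.mulVec v) := by
  intro v
  have hsmoother : v ⬝ᵥ (M * (M + Mᵀ - A)⁻¹ * Mᵀ)⁻¹ *ᵥ v ≤ 1 * (v ⬝ᵥ A⁻¹ *ᵥ v) := by
    simpa using hA.dotProduct_mul_inv_mul_transpose_le (Q := 1)
      (posDef_symmetrizedSmoother hA hM).isUnit one_pos
      (by simpa using dotProduct_mulVec_le_symmetrizedSmoother hM) v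
  have hauxiliary := hA.dotProduct_mul_inv_mul_transpose_le hB.isUnit hγ hcont v
  have hnonneg : 0 ≤ v ⬝ᵥ A⁻¹ *ᵥ v := by
    simpa using hA.inv.posSemidef.dotProduct_mulVec_nonneg v
  rw [add_mulVec, dotProduct_add]
  linarith
end

section
/- Let A be an n×n real SPD matrix, 𝓑 an m×m real SPD matrix, Π an n×m real matrix, ℐ an m×n real matrix with Π ℐ = Iₙ, and suppose (ℐv)ᵀ 𝓑 (ℐv) ≤ β · vᵀ A v for all v ∈ ℝⁿ, for some β > 0. Let M be an n×n real matrix with M + Mᵀ − A SPD (hence M invertible), let M̄ = M (M + Mᵀ − A)⁻¹ Mᵀ, and define B_mult⁻¹ = M̄⁻¹ + (I − M⁻ᵀ A) Π 𝓑⁻¹ Πᵀ (I − A M⁻¹). Then, with ξ = max{β, 1}, it holds that ξ⁻¹ · vᵀ A⁻¹ v ≤ vᵀ B_mult⁻¹ v for all v ∈ ℝⁿ. -/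
/-!
Write `u = A⁻¹ v`, `p = M⁻¹ v` and `w = u - p = (I - M⁻¹ A) u`. The smoothing part of
`vᵀ B_mult⁻¹ v` is `pᵀ (M + Mᵀ - A) p = ‖u‖²_A - ‖w‖²_A`, and the auxiliary space part is
`sᵀ 𝓑⁻¹ s` with `s = Πᵀ A w`. Since `Π ℐ = I`, `sᵀ (ℐ w) = ‖w‖²_A`, so Cauchy–Schwarz in the
`𝓑`-inner product together with the stability of `ℐ` gives `‖w‖²_A ≤ max β 1 · sᵀ 𝓑⁻¹ s`.
Hence `vᵀ B_mult⁻¹ v ≥ ‖u‖²_A - (1 - ξ⁻¹) ‖w‖²_A ≥ ξ⁻¹ ‖u‖²_A = ξ⁻¹ vᵀ A⁻¹ v`.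
-/

open Matrix

namespace Matrix

section CommRing

variable {α n m : Type*} [CommRing α] [Fintype n] [Fintype m]

lemma dotProduct_mulVec_comm_of_transpose_eq {C : Matrix n n α} (hC : Cᵀ = C) (x y : n → α) :
    x ⬝ᵥ C *ᵥ y = y ⬝ᵥ C *ᵥ x := by
  conv_lhs => rw [← hC]
  exact dotProduct_transpose_mulVec C x y

lemma dotProduct_transpose_mul_mul_mulVec (C : Matrix m n α) (D : Matrix m m α) (v : n → α) :
    v ⬝ᵥ (Cᵀ * D * C) *ᵥ v = (C *ᵥ v) ⬝ᵥ D *ᵥ (C *ᵥ v) := by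
  rw [← mulVec_mulVec, ← mulVec_mulVec, dotProduct_transpose_mulVec, dotProduct_comm]

lemma dotProduct_add_transpose_sub_mulVec {A M : Matrix n n α} (hA : Aᵀ = A) {u p : n → α}
    (h : A *ᵥ u = M *ᵥ p) :
    p ⬝ᵥ (M + Mᵀ - A) *ᵥ p = u ⬝ᵥ A *ᵥ u - (u - p) ⬝ᵥ A *ᵥ (u - p) := by
  have hpu : p ⬝ᵥ A *ᵥ u = u ⬝ᵥ A *ᵥ p := dotProduct_mulVec_comm_of_transpose_eq hA p u
  have hMt : p ⬝ᵥ Mᵀ *ᵥ p = p ⬝ᵥ M *ᵥ p := dotProduct_transpose_mulVec M p p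
  simp only [add_mulVec, sub_mulVec, mulVec_sub, dotProduct_add, dotProduct_sub, sub_dotProduct,
    hMt, ← h, hpu]
  ring

variable [DecidableEq n]

lemma dotProduct_inv_mul_inv_mul_transpose_mulVec {M N : Matrix n n α} (hN : IsUnit N.det)
    (v : n → α) : v ⬝ᵥ (M * N⁻¹ * Mᵀ)⁻¹ *ᵥ v = (M⁻¹ *ᵥ v) ⬝ᵥ N *ᵥ (M⁻¹ *ᵥ v) := by
  rw [mul_inv_rev, mul_inv_rev, nonsing_inv_nonsing_inv N hN, ← transpose_nonsing_inv, ← mul_assoc,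
    dotProduct_transpose_mul_mul_mulVec]

lemma mulVec_nonsing_inv_mulVec_s10 {A : Matrix n n α} (hA : IsUnit A.det) (v : n → α) :
    A *ᵥ (A⁻¹ *ᵥ v) = v := by
  rw [mulVec_mulVec, mul_nonsing_inv A hA, one_mulVec]

lemma nonsing_inv_mulVec_mulVec {A : Matrix n n α} (hA : IsUnit A.det) (v : n → α) :
    A⁻¹ *ᵥ (A *ᵥ v) = v := by
  rw [mulVec_mulVec, nonsing_inv_mul A hA, one_mulVec]

end CommRing

variable {n m : Type*}

lemma PosSemidef.transpose_eq_self {A : Matrix n n ℝ} (hA : A.PosSemidef) : Aᵀ = A :=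
  (isHermitian_iff_isSymm.mp hA.isHermitian).eq

variable [Fintype n] [Fintype m]

lemma PosSemidef.dotProduct_mulVec_sq_le_s10 {C : Matrix n n ℝ} (hC : C.PosSemidef) (x y : n → ℝ) :
    (x ⬝ᵥ C *ᵥ y) ^ 2 ≤ (x ⬝ᵥ C *ᵥ x) * (y ⬝ᵥ C *ᵥ y) := by
  have hsymm : y ⬝ᵥ C *ᵥ x = x ⬝ᵥ C *ᵥ y :=
    dotProduct_mulVec_comm_of_transpose_eq hC.transpose_eq_self y x
  have hquad : ∀ t : ℝ, 0 ≤ (y ⬝ᵥ C *ᵥ y) * (t * t) + 2 * (x ⬝ᵥ C *ᵥ y) * t + x ⬝ᵥ C *ᵥ x := by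
    intro t
    have h := hC.dotProduct_mulVec_nonneg (x + t • y)
    simp only [star_trivial, mulVec_add, mulVec_smul, dotProduct_add, add_dotProduct,
      dotProduct_smul, smul_dotProduct, smul_eq_mul, hsymm] at h
    linarith
  have := discrim_le_zero hquad
  rw [discrim] at this
  linarith

lemma PosDef.dotProduct_sq_le {B : Matrix m m ℝ} [DecidableEq m] (hB : B.PosDef) (s y : m → ℝ) :
    (s ⬝ᵥ y) ^ 2 ≤ (s ⬝ᵥ B⁻¹ *ᵥ s) * (y ⬝ᵥ B *ᵥ y) := by
  have h := hB.inv.posSemidef.dotProduct_mulVec_sq_le_s10 s (B *ᵥ y)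
  rwa [nonsing_inv_mulVec_mulVec ((isUnit_iff_isUnit_det B).mp hB.isUnit),
    dotProduct_comm (B *ᵥ y) y] at h

lemma isUnit_det_of_posDef_add_transpose_sub [DecidableEq n] {A M : Matrix n n ℝ}
    (hA : A.PosSemidef) (hM : (M + Mᵀ - A).PosDef) : IsUnit M.det := by
  rw [isUnit_iff_ne_zero, Ne, ← exists_mulVec_eq_zero_iff]
  rintro ⟨x, hx, hMx⟩
  have hpos := hM.dotProduct_mulVec_pos hx
  have hnonneg := hA.dotProduct_mulVec_nonneg x
  simp only [star_trivial, add_mulVec, sub_mulVec, dotProduct_add, dotProduct_sub, hMx,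
    dotProduct_transpose_mulVec M x x, dotProduct_zero] at hpos hnonneg
  linarith

end Matrix

lemma inv_max_one_mul_le_sub_add {β a c d : ℝ} (had : a ≤ d) (hc : 0 ≤ c)
    (hcs : a ^ 2 ≤ c * (β * a)) : (max β 1)⁻¹ * d ≤ d - a + c := by
  have hξ : 1 ≤ max β 1 := le_max_right _ _
  have hac : a ≤ max β 1 * c := by
    rcases le_or_gt a 0 with ha | ha
    · exact ha.trans (mul_nonneg (zero_le_one.trans hξ) hc)
    · have : a ≤ β * c := by nlinarith
      exact this.trans (mul_le_mul_of_nonneg_right (le_max_left _ _) hc)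
  rw [inv_mul_le_iff₀ (by linarith)]
  nlinarith

theorem stmt_10_general {n m : ℕ}
    (A : Matrix (Fin n) (Fin n) ℝ) (hA : A.PosDef)
    (B : Matrix (Fin m) (Fin m) ℝ) (hB : B.PosDef)
    (P : Matrix (Fin n) (Fin m) ℝ) (J : Matrix (Fin m) (Fin n) ℝ)
    (hPJ : P * J = 1)
    (β : ℝ)
    (hstab : ∀ v : Fin n → ℝ,
      (J.mulVec v) ⬝ᵥ B.mulVec (J.mulVec v) ≤ β * (v ⬝ᵥ A.mulVec v))
    (M : Matrix (Fin n) (Fin n) ℝ) (hM : (M + Mᵀ - A).PosDef) :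
    ∀ v : Fin n → ℝ,
      (max β 1)⁻¹ * (v ⬝ᵥ A⁻¹.mulVec v) ≤
        v ⬝ᵥ ((M * (M + Mᵀ - A)⁻¹ * Mᵀ)⁻¹ +
          (1 - (Mᵀ)⁻¹ * A) * (P * B⁻¹ * Pᵀ) * (1 - A * M⁻¹)).mulVec v := by
  intro v
  have hAsymm := hA.posSemidef.transpose_eq_self
  have hAdet := (isUnit_iff_isUnit_det A).mp hA.isUnit
  have hMdet := isUnit_det_of_posDef_add_transpose_sub hA.posSemidef hM
  set u := A⁻¹ *ᵥ v
  set p := M⁻¹ *ᵥ v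
  set s := Pᵀ *ᵥ (A *ᵥ (u - p))
  have hAu : A *ᵥ u = v := mulVec_nonsing_inv_mulVec_s10 hAdet v
  have hMp : M *ᵥ p = v := mulVec_nonsing_inv_mulVec_s10 hMdet v
  have henergy := dotProduct_add_transpose_sub_mulVec hAsymm (hAu.trans hMp.symm)
  have hsmooth : v ⬝ᵥ (M * (M + Mᵀ - A)⁻¹ * Mᵀ)⁻¹ *ᵥ v =
      u ⬝ᵥ A *ᵥ u - (u - p) ⬝ᵥ A *ᵥ (u - p) := by
    rw [dotProduct_inv_mul_inv_mul_transpose_mulVec ((isUnit_iff_isUnit_det _).mp hM.isUnit),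
      henergy]
  have hcoarse : v ⬝ᵥ ((1 - (Mᵀ)⁻¹ * A) * (P * B⁻¹ * Pᵀ) * (1 - A * M⁻¹)) *ᵥ v =
      s ⬝ᵥ B⁻¹ *ᵥ s := by
    have hleft : 1 - (Mᵀ)⁻¹ * A = (1 - A * M⁻¹)ᵀ := by
      rw [transpose_sub, transpose_one, transpose_mul, transpose_nonsing_inv, hAsymm]
    have hright : (1 - A * M⁻¹) *ᵥ v = A *ᵥ (u - p) := by
      rw [sub_mulVec, one_mulVec, ← mulVec_mulVec, mulVec_sub, hAu]
    rw [hleft, dotProduct_transpose_mul_mul_mulVec, hright,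
      show P * B⁻¹ * Pᵀ = Pᵀᵀ * B⁻¹ * Pᵀ by rw [transpose_transpose],
      dotProduct_transpose_mul_mul_mulVec]
  have hsJ : s ⬝ᵥ J *ᵥ (u - p) = (u - p) ⬝ᵥ A *ᵥ (u - p) := by
    rw [dotProduct_comm, dotProduct_transpose_mulVec, mulVec_mulVec, hPJ, one_mulVec,
      dotProduct_comm]
  have hcs := hB.dotProduct_sq_le s (J *ᵥ (u - p))
  rw [hsJ] at hcs
  have hsmooth_nonneg := hM.posSemidef.dotProduct_mulVec_nonneg p
  rw [star_trivial, henergy] at hsmooth_nonneg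
  have hs_nonneg := hB.inv.posSemidef.dotProduct_mulVec_nonneg s
  rw [star_trivial] at hs_nonneg
  have hvu : v ⬝ᵥ A⁻¹ *ᵥ v = u ⬝ᵥ A *ᵥ u := by rw [hAu, dotProduct_comm]
  rw [add_mulVec, dotProduct_add, hsmooth, hcoarse, hvu]
  exact inv_max_one_mul_le_sub_add (by linarith) hs_nonneg
    (hcs.trans (mul_le_mul_of_nonneg_left (hstab (u - p)) hs_nonneg))

/-- Lower spectral bound for the multiplicative auxiliary space preconditioner. -/
theorem stmt_10 {n m : ℕ}
    (A : Matrix (Fin n) (Fin n) ℝ) (hA : A.PosDef)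
    (B : Matrix (Fin m) (Fin m) ℝ) (hB : B.PosDef)
    (P : Matrix (Fin n) (Fin m) ℝ) (J : Matrix (Fin m) (Fin n) ℝ)
    (hPJ : P * J = 1)
    (β : ℝ) (hβ : 0 < β)
    (hstab : ∀ v : Fin n → ℝ,
      (J.mulVec v) ⬝ᵥ B.mulVec (J.mulVec v) ≤ β * (v ⬝ᵥ A.mulVec v))
    (M : Matrix (Fin n) (Fin n) ℝ) (hM : (M + Mᵀ - A).PosDef) :
    ∀ v : Fin n → ℝ,
      (max β 1)⁻¹ * (v ⬝ᵥ A⁻¹.mulVec v) ≤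
        v ⬝ᵥ ((M * (M + Mᵀ - A)⁻¹ * Mᵀ)⁻¹ +
          (1 - (Mᵀ)⁻¹ * A) * (P * B⁻¹ * Pᵀ) * (1 - A * M⁻¹)).mulVec v :=
  stmt_10_general A hA B hB P J hPJ β hstab M hM
end

section
/- Let 𝓐 be an (n+k)×(n+k) real SPD matrix written in 2×2 block form 𝓐 = [[𝓐ee, 𝓐eb],[𝓐be, 𝓐bb]] with 𝓐ee of size n×n, 𝓐bb of size k×k, and 𝓐be = 𝓐ebᵀ. Then 𝓐ee is SPD, the Schur complement 𝓢 = 𝓐bb − 𝓐be 𝓐ee⁻¹ 𝓐eb is SPD, and if S is a k×k real SPD matrix satisfying α⁻¹ · wᵀ 𝓢 w ≤ wᵀ S w ≤ β · wᵀ 𝓢 w for all w ∈ ℝᵏ (with constants α, β > 0), then the static condensation preconditioner B_sc = [[𝓐ee, 𝓐eb],[𝓐be, 𝓐be 𝓐ee⁻¹ 𝓐eb + S]] is SPD and satisfies min{1, α⁻¹} · xᵀ 𝓐 x ≤ xᵀ B_sc x ≤ max{1, β} · xᵀ 𝓐 x for all x ∈ ℝⁿ⁺ᵏ. -/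
/-!
For `A` hermitian and invertible, the block LDLᴴ factorisation gives, with `u = x_e + A⁻¹ B x_b`,
`xᴴ [[A, B], [Bᴴ, D]] x = uᴴ A u + x_bᴴ (D - Bᴴ A⁻¹ B) x_b`.
The matrix `𝓐` and the preconditioner `B_sc` share the blocks `A = 𝓐ee` and `B = 𝓐eb` and have
Schur complements `𝓢` and `S`, so their quadratic forms differ only in the second term, where
`S` and `𝓢` are spectrally equivalent; positivity of either form is equivalent to positivity of
`A` together with its Schur complement.
-/

open Matrix

namespace Matrix

variable {m n R : Type*}

theorem PosDef.of_fromBlocks_left [Ring R] [PartialOrder R] [StarRing R]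
    {A : Matrix m m R} {B : Matrix m n R} {C : Matrix n m R} {D : Matrix n n R}
    (h : (fromBlocks A B C D).PosDef) : A.PosDef :=
  h.submatrix Sum.inl_injective

variable [Fintype m] [Fintype n] [DecidableEq m]

theorem star_dotProduct_fromBlocks_mulVec [CommRing R] [StarRing R] {A : Matrix m m R}
    [Invertible A] (hA : A.IsHermitian) (B : Matrix m n R) (D : Matrix n n R)
    (x : m ⊕ n → R) :
    star x ⬝ᵥ fromBlocks A B Bᴴ D *ᵥ x =
      star (x ∘ Sum.inl + (A⁻¹ * B) *ᵥ (x ∘ Sum.inr)) ⬝ᵥ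
          A *ᵥ (x ∘ Sum.inl + (A⁻¹ * B) *ᵥ (x ∘ Sum.inr)) +
        star (x ∘ Sum.inr) ⬝ᵥ (D - Bᴴ * A⁻¹ * B) *ᵥ (x ∘ Sum.inr) := by
  simpa only [Sum.elim_comp_inl_inr, ← dotProduct_mulVec] using
    schur_complement_eq₁₁ B D (x ∘ Sum.inl) (x ∘ Sum.inr) hA

theorem PosDef.fromBlocks₁₁_posDef_iff [CommRing R] [PartialOrder R] [StarRing R]
    [StarOrderedRing R]
    {A : Matrix m m R} (B : Matrix m n R) (D : Matrix n n R) (hA : A.PosDef) [Invertible A] :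
    (fromBlocks A B Bᴴ D).PosDef ↔ (D - Bᴴ * A⁻¹ * B).PosDef := by
  rw [posDef_iff_dotProduct_mulVec, IsHermitian.fromBlocks₁₁ _ _ hA.1]
  refine ⟨fun h => .of_dotProduct_mulVec_pos h.1 fun w hw => ?_,
    fun h => ⟨h.1, fun x hx => ?_⟩⟩
  · have hx : (-((A⁻¹ * B) *ᵥ w) ⊕ᵥ w) ≠ 0 := fun h0 =>
      hw (by simpa using congrArg (· ∘ Sum.inr) h0)
    simpa [star_dotProduct_fromBlocks_mulVec hA.1] using h.2 hx
  · rw [star_dotProduct_fromBlocks_mulVec hA.1]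
    by_cases hw : x ∘ Sum.inr = 0
    · have hu : x ∘ Sum.inl ≠ 0 := fun hu => hx (by
        rw [← Sum.elim_comp_inl_inr x, hu, hw, Sum.elim_zero_zero])
      simpa [hw] using hA.dotProduct_mulVec_pos hu
    · exact add_pos_of_nonneg_of_pos (hA.posSemidef.dotProduct_mulVec_nonneg _)
        (h.dotProduct_mulVec_pos hw)

theorem mul_dotProduct_fromBlocks_mulVec_le_of_schur {A : Matrix m m ℝ} [Invertible A]
    (hA : A.PosDef) (B : Matrix m n ℝ) {D D' : Matrix n n ℝ} {a b : ℝ} (hab : a ≤ b)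
    (hschur : ∀ w, a * (w ⬝ᵥ (D - Bᵀ * A⁻¹ * B) *ᵥ w) ≤ b * (w ⬝ᵥ (D' - Bᵀ * A⁻¹ * B) *ᵥ w))
    (x : m ⊕ n → ℝ) :
    a * (x ⬝ᵥ fromBlocks A B Bᵀ D *ᵥ x) ≤ b * (x ⬝ᵥ fromBlocks A B Bᵀ D' *ᵥ x) := by
  have hform := star_dotProduct_fromBlocks_mulVec hA.1 B
  simp only [star_trivial, conjTranspose_eq_transpose_of_trivial] at hform
  have hu := hA.posSemidef.dotProduct_mulVec_nonneg (x ∘ Sum.inl + (A⁻¹ * B) *ᵥ (x ∘ Sum.inr))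
  rw [star_trivial] at hu
  rw [hform, hform, mul_add, mul_add]
  exact add_le_add (mul_le_mul_of_nonneg_right hab hu) (hschur _)

end Matrix

theorem stmt_13_general {n k : ℕ}
    (Aee : Matrix (Fin n) (Fin n) ℝ) (Aeb : Matrix (Fin n) (Fin k) ℝ)
    (Abb : Matrix (Fin k) (Fin k) ℝ)
    (hA : (Matrix.fromBlocks Aee Aeb Aebᵀ Abb).PosDef)
    (S : Matrix (Fin k) (Fin k) ℝ) (hS : S.PosDef)
    (α β : ℝ)
    (hlow : ∀ w : Fin k → ℝ,
      α⁻¹ * (w ⬝ᵥ (Abb - Aebᵀ * Aee⁻¹ * Aeb).mulVec w) ≤ w ⬝ᵥ S.mulVec w)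
    (hup : ∀ w : Fin k → ℝ,
      w ⬝ᵥ S.mulVec w ≤ β * (w ⬝ᵥ (Abb - Aebᵀ * Aee⁻¹ * Aeb).mulVec w)) :
    Aee.PosDef ∧
    (Abb - Aebᵀ * Aee⁻¹ * Aeb).PosDef ∧
    (Matrix.fromBlocks Aee Aeb Aebᵀ (Aebᵀ * Aee⁻¹ * Aeb + S)).PosDef ∧
    ∀ x : Fin n ⊕ Fin k → ℝ,
      min 1 α⁻¹ * (x ⬝ᵥ (Matrix.fromBlocks Aee Aeb Aebᵀ Abb).mulVec x) ≤
          x ⬝ᵥ (Matrix.fromBlocks Aee Aeb Aebᵀ (Aebᵀ * Aee⁻¹ * Aeb + S)).mulVec x ∧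
        x ⬝ᵥ (Matrix.fromBlocks Aee Aeb Aebᵀ (Aebᵀ * Aee⁻¹ * Aeb + S)).mulVec x ≤
          max 1 β * (x ⬝ᵥ (Matrix.fromBlocks Aee Aeb Aebᵀ Abb).mulVec x) := by
  have hAee : Aee.PosDef := hA.of_fromBlocks_left
  let := hAee.isUnit.invertible
  have hAebT : Aebᵀ = Aebᴴ := (conjTranspose_eq_transpose_of_trivial Aeb).symm
  have hSchur : (Abb - Aebᵀ * Aee⁻¹ * Aeb).PosDef := by
    rw [hAebT] at hA ⊢
    exact (hAee.fromBlocks₁₁_posDef_iff Aeb Abb).mp hA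
  have hSchur_nonneg w : 0 ≤ w ⬝ᵥ (Abb - Aebᵀ * Aee⁻¹ * Aeb) *ᵥ w := by
    simpa only [star_trivial] using hSchur.posSemidef.dotProduct_mulVec_nonneg w
  refine ⟨hAee, hSchur, ?_, fun x => ⟨?_, ?_⟩⟩
  · rw [hAebT, PosDef.fromBlocks₁₁_posDef_iff Aeb _ hAee, add_sub_cancel_left]
    exact hS
  · simpa using mul_dotProduct_fromBlocks_mulVec_le_of_schur hAee Aeb (min_le_left 1 α⁻¹)
      (fun w => by
        rw [add_sub_cancel_left, one_mul]
        exact (mul_le_mul_of_nonneg_right (min_le_right _ _) (hSchur_nonneg w)).trans (hlow w)) x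
  · simpa using mul_dotProduct_fromBlocks_mulVec_le_of_schur hAee Aeb (le_max_left 1 β)
      (fun w => by
        rw [add_sub_cancel_left, one_mul]
        exact (hup w).trans (mul_le_mul_of_nonneg_right (le_max_right _ _) (hSchur_nonneg w))) x

/-- Spectral equivalence of the static condensation preconditioner. -/
theorem stmt_13 {n k : ℕ}
    (Aee : Matrix (Fin n) (Fin n) ℝ) (Aeb : Matrix (Fin n) (Fin k) ℝ)
    (Abb : Matrix (Fin k) (Fin k) ℝ)
    (hA : (Matrix.fromBlocks Aee Aeb Aebᵀ Abb).PosDef)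
    (S : Matrix (Fin k) (Fin k) ℝ) (hS : S.PosDef)
    (α β : ℝ) (hα : 0 < α) (hβ : 0 < β)
    (hlow : ∀ w : Fin k → ℝ,
      α⁻¹ * (w ⬝ᵥ (Abb - Aebᵀ * Aee⁻¹ * Aeb).mulVec w) ≤ w ⬝ᵥ S.mulVec w)
    (hup : ∀ w : Fin k → ℝ,
      w ⬝ᵥ S.mulVec w ≤ β * (w ⬝ᵥ (Abb - Aebᵀ * Aee⁻¹ * Aeb).mulVec w)) :
    Aee.PosDef ∧
    (Abb - Aebᵀ * Aee⁻¹ * Aeb).PosDef ∧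
    (Matrix.fromBlocks Aee Aeb Aebᵀ (Aebᵀ * Aee⁻¹ * Aeb + S)).PosDef ∧
    ∀ x : Fin n ⊕ Fin k → ℝ,
      min 1 α⁻¹ * (x ⬝ᵥ (Matrix.fromBlocks Aee Aeb Aebᵀ Abb).mulVec x) ≤
          x ⬝ᵥ (Matrix.fromBlocks Aee Aeb Aebᵀ (Aebᵀ * Aee⁻¹ * Aeb + S)).mulVec x ∧
        x ⬝ᵥ (Matrix.fromBlocks Aee Aeb Aebᵀ (Aebᵀ * Aee⁻¹ * Aeb + S)).mulVec x ≤
          max 1 β * (x ⬝ᵥ (Matrix.fromBlocks Aee Aeb Aebᵀ Abb).mulVec x) :=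
  stmt_13_general Aee Aeb Abb hA S hS α β hlow hup
end

section
/- Let G be a simple graph on a finite nonempty vertex set V with values x : V → ℝ, and let κ be a natural number with |V| ≤ κ. Suppose that any two vertices of G are joined by a path in G of length at most κ. Then |V| · (max_{v∈V} x(v) − min_{v∈V} x(v))² ≤ κ² · Σ_{{u,w} ∈ E(G)} (x(u) − x(w))², where the sum runs over the edge set E(G) of G. -/
private lemma walk_abs_le {V : Type*} {G : SimpleGraph V} (x : V → ℝ)
    (a : Sym2 V → ℝ) (ha : ∀ u w, a s(u, w) = |x u - x w|) :
    ∀ {u v : V} (p : G.Walk u v), |x u - x v| ≤ (p.edges.map a).sum := by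
  intro u v p
  induction p with
  | nil => simp
  | @cons u w v h q ih =>
    simp only [SimpleGraph.Walk.edges_cons, List.map_cons, List.sum_cons, ha]
    calc |x u - x v| ≤ |x u - x w| + |x w - x v| := by
          have := abs_sub_abs_le_abs_sub (x u - x w) (x v - x w)
          calc |x u - x v| = |(x u - x w) - (x v - x w)| := by ring_nf
            _ ≤ |x u - x w| + |x v - x w| := abs_sub _ _
            _ = |x u - x w| + |x w - x v| := by rw [abs_sub_comm (x v)]
      _ ≤ |x u - x w| + (q.edges.map a).sum := by linarith [ih]

/-- Oscillation of values on a connected graph with short paths is controlled by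
the sum of squared differences across edges. -/
theorem stmt_15 {V : Type*} [Fintype V] [Nonempty V] [DecidableEq V]
    (G : SimpleGraph V) [DecidableRel G.Adj] (x : V → ℝ) (κ : ℕ)
    (hcard : Fintype.card V ≤ κ)
    (hpath : ∀ u v : V, ∃ p : G.Walk u v, p.length ≤ κ) :
    (Fintype.card V : ℝ) *
        (Finset.univ.sup' Finset.univ_nonempty x -
          Finset.univ.inf' Finset.univ_nonempty x) ^ 2 ≤
      (κ : ℝ) ^ 2 *
        ∑ e ∈ G.edgeFinset,
          Sym2.lift ⟨fun u w => (x u - x w) ^ 2, by intros; ring⟩ e := by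
  set f : Sym2 V → ℝ := Sym2.lift ⟨fun u w => (x u - x w) ^ 2, by intros; ring⟩ with hf
  set a : Sym2 V → ℝ := Sym2.lift ⟨fun u w => |x u - x w|, fun u w => by dsimp only; rw [abs_sub_comm]⟩ with ha
  have haf : ∀ e : Sym2 V, (a e) ^ 2 = f e := by
    intro e; induction e using Sym2.inductionOn with
    | hf u w => simp [ha, hf, sq_abs]
  have hf0 : ∀ e : Sym2 V, 0 ≤ f e := by
    intro e; induction e using Sym2.inductionOn with
    | hf u w => simp [hf]; positivity
  obtain ⟨u, -, hu⟩ := Finset.exists_mem_eq_sup' Finset.univ_nonempty x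
  obtain ⟨v, -, hv⟩ := Finset.exists_mem_eq_inf' Finset.univ_nonempty x
  obtain ⟨p, hp⟩ := hpath u v
  set q := p.bypass with hq
  have hql : q.length ≤ κ := le_trans (SimpleGraph.Walk.length_bypass_le p) hp
  have hnd : q.edges.Nodup := p.bypass_isPath.isTrail.edges_nodup
  set s : Finset (Sym2 V) := q.edges.toFinset with hs
  have hscard : s.card ≤ κ := by
    rw [hs, List.toFinset_card_of_nodup hnd, SimpleGraph.Walk.length_edges]; exact hql
  have hsubset : s ⊆ G.edgeFinset := by
    intro e he
    rw [SimpleGraph.mem_edgeFinset]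
    exact q.edges_subset_edgeSet (by simpa [hs] using he)
  have h1 : |x u - x v| ≤ ∑ e ∈ s, a e := by
    have := walk_abs_le (G := G) x a (fun u w => by simp [ha]) q
    rwa [hs, List.sum_toFinset _ hnd]
  have h2 : (∑ e ∈ s, a e) ^ 2 ≤ (s.card : ℝ) * ∑ e ∈ s, (a e) ^ 2 :=
    sq_sum_le_card_mul_sum_sq
  have h3 : ∑ e ∈ s, (a e) ^ 2 ≤ ∑ e ∈ G.edgeFinset, f e := by
    rw [Finset.sum_congr rfl fun e _ => haf e]
    exact Finset.sum_le_sum_of_subset_of_nonneg hsubset fun e _ _ => hf0 e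
  have hE0 : 0 ≤ ∑ e ∈ G.edgeFinset, f e := Finset.sum_nonneg fun e _ => hf0 e
  have key : (x u - x v) ^ 2 ≤ (κ : ℝ) * ∑ e ∈ G.edgeFinset, f e := by
    calc (x u - x v) ^ 2 = |x u - x v| ^ 2 := (sq_abs _).symm
      _ ≤ (∑ e ∈ s, a e) ^ 2 := by
          apply pow_le_pow_left₀ (abs_nonneg _) h1
      _ ≤ (s.card : ℝ) * ∑ e ∈ s, (a e) ^ 2 := h2
      _ ≤ (κ : ℝ) * ∑ e ∈ G.edgeFinset, f e := by
          apply mul_le_mul (by exact_mod_cast hscard) h3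
            (Finset.sum_nonneg fun e _ => (haf e) ▸ (hf0 e)) (by positivity)
  rw [← hu, ← hv] at key
  have hk : (Fintype.card V : ℝ) ≤ (κ : ℝ) := by exact_mod_cast hcard
  have hsq : 0 ≤ (Finset.univ.sup' Finset.univ_nonempty x -
      Finset.univ.inf' Finset.univ_nonempty x) ^ 2 := sq_nonneg _
  calc (Fintype.card V : ℝ) * _ ≤ (κ : ℝ) * ((Finset.univ.sup' Finset.univ_nonempty x -
        Finset.univ.inf' Finset.univ_nonempty x) ^ 2) := mul_le_mul_of_nonneg_right hk hsq
    _ ≤ (κ : ℝ) * ((κ : ℝ) * ∑ e ∈ G.edgeFinset, f e) :=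
        mul_le_mul_of_nonneg_left key (Nat.cast_nonneg _)
    _ = (κ : ℝ) ^ 2 * ∑ e ∈ G.edgeFinset, f e := by ring
end
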